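/- arXiv:1004.1208 — 2 statements merged into one kernel-verified Lean document; each statement's English description precedes it below -/
import Mathlib

section
/- If a bipartite graph G = (L ∪ R, E) satisfies the (α, β)-strong goodness property (every two distinct left vertices have at least α common neighbors, and every three distinct left vertices have at most β common neighbors) with α > k·β, then G satisfies the weak goodness property: for every pair of distinct left vertices ℓᵢ, ℓⱼ and every set X ⊆ L with |X| < k and ℓᵢ, ℓⱼ ∉ X, the set N(ℓᵢ) ∩ N(ℓⱼ) is not contained in N(X). -/
open Finset

/-- Strong goodness implies weak goodness for the VC-SNDP family construction. -/
theorem strong_goodness_implies_weak_goodness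
    {L R : Type*} [Fintype L] [Fintype R] [DecidableEq L] [DecidableEq R]
    (Adj : L → R → Prop) [∀ l r, Decidable (Adj l r)] (k α β : ℕ) (hk : 0 < k)
    (N : L → Finset R) (hN : ∀ ℓ, N ℓ = (univ.filter (fun x : R => Adj ℓ x) : Finset R))
    (h1 : ∀ i j : L, i ≠ j → α ≤ (N i ∩ N j).card)
    (h2 : ∀ i j t : L, i ≠ j → i ≠ t → j ≠ t → (N i ∩ N j ∩ N t).card ≤ β)
    (hαβ : k * β < α) :
    ∀ i j : L, i ≠ j → ∀ X : Finset L, X.card < k → i ∉ X → j ∉ X →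
      ¬ (N i ∩ N j ⊆ X.biUnion N) := by
  intro i j hij X hX hiX hjX hsub
  have hsub2 : N i ∩ N j ⊆ X.biUnion (fun t => N i ∩ N j ∩ N t) := by
    intro x hx
    obtain ⟨t, ht, hxt⟩ := mem_biUnion.mp (hsub hx)
    exact mem_biUnion.mpr ⟨t, ht, mem_inter.mpr ⟨hx, hxt⟩⟩
  have h3 : (N i ∩ N j).card ≤ ∑ t ∈ X, (N i ∩ N j ∩ N t).card :=
    le_trans (card_le_card hsub2) (card_biUnion_le)
  have h4 : ∑ t ∈ X, (N i ∩ N j ∩ N t).card ≤ X.card * β := by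
    rw [← smul_eq_mul, ← Finset.sum_const]
    exact Finset.sum_le_sum fun t ht =>
      h2 i j t hij (fun h => hiX (h ▸ ht)) (fun h => hjX (h ▸ ht))
  have := h1 i j hij
  have h5 : X.card * β ≤ k * β := Nat.mul_le_mul_right β hX.le
  omega
end

section
/- If for every source-sink pair (s,t) ∈ M and every set X of at most k−1 terminals with s,t ∉ X there is a subset Tᵢ in the family with s,t ∈ Tᵢ and X ∩ Tᵢ = ∅ (good family), and each Eᵢ is a feasible solution to the element-connectivity instance on terminals Tᵢ (so s and t are r(s,t)-element connected in (V, Eᵢ) whenever s,t ∈ Tᵢ), then in the graph (V, ⋃ᵢ Eᵢ), for every pair (s,t) ∈ M and every vertex set X ⊆ V \ {s,t} with |X| ≤ r(s,t) − 1, removing X does not disconnect s from t; hence every pair (s,t) ∈ M is r(s,t)-vertex-connected. -/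
open Finset

/-- The graph `H` with the edges in `F` and all edges incident to vertices of `Y`
deleted. -/
def delGraph {V : Type*} (H : SimpleGraph V) (F : Set (Sym2 V)) (Y : Set V) :
    SimpleGraph V where
  Adj a b := H.Adj a b ∧ a ∉ Y ∧ b ∉ Y ∧ s(a, b) ∉ F
  symm := by
    refine ⟨?_⟩
    rintro a b ⟨h1, h2, h3, h4⟩
    exact ⟨h1.symm, h3, h2, by rwa [Sym2.eq_swap]⟩
  loopless := by
    refine ⟨?_⟩
    rintro a ⟨h, -⟩
    exact H.loopless.irrefl a h

/-- `s` and `t` are `r`-element connected in `H` with respect to terminal set `T`: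
removing any fewer than `r` elements (edges, or vertices outside `T ∪ {s,t}`)
leaves `s` and `t` connected. -/
def ElemConn {V : Type*} (H : SimpleGraph V) (T : Set V) (r : ℕ) (s t : V) : Prop :=
  ∀ (F : Finset (Sym2 V)) (Y : Finset V),
    (↑Y : Set V) ⊆ (T ∪ {s, t})ᶜ → F.card + Y.card < r →
      (delGraph H ↑F ↑Y).Reachable s t

/-
Given a pair `(s, t) ∈ M` and a vertex set `X` with `|X| < r(s,t)` avoiding `s, t`, apply
goodness to the terminals in `X`: some `Tᵢ` contains `s, t` and misses `X ∩ T`, hence all of `X`.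
Then every vertex of `X` is a non-terminal for the instance `Tᵢ`, so deleting `X` removes fewer
than `r(s,t)` elements from `(V, Eᵢ)`, which leaves `s, t` connected; a fortiori in `⋃ᵢ Eᵢ`.
-/

section

variable {V : Type*}

lemma delGraph_mono {H H' : SimpleGraph V} (h : H ≤ H') (F : Set (Sym2 V)) (Y : Set V) :
    delGraph H F Y ≤ delGraph H' F Y := by
  rintro a b ⟨hab, ha, hb, hF⟩
  exact ⟨h hab, ha, hb, hF⟩

lemma ElemConn.reachable_delGraph_of_card_lt {H : SimpleGraph V} {T : Set V} {r : ℕ}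
    {s t : V} (h : ElemConn H T r s t) {X : Finset V} (hXT : Disjoint (X : Set V) T)
    (hs : s ∉ X) (ht : t ∉ X) (hcard : X.card < r) :
    (delGraph H ∅ X).Reachable s t := by
  have hX : (X : Set V) ⊆ (T ∪ {s, t})ᶜ := by
    intro x hx
    simp only [Set.mem_compl_iff, Set.mem_union, Set.mem_insert_iff, Set.mem_singleton_iff,
      not_or]
    exact ⟨hXT.notMem_of_mem_left hx, by rintro rfl; exact hs hx, by rintro rfl; exact ht hx⟩
  simpa using h ∅ X hX (by simpa using hcard)

end

theorem good_family_gives_vertex_connectivity_general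
    {V : Type*} (T : Finset V) (M : Set (V × V))
    (r : V → V → ℕ) (k m : ℕ)
    (Tfam : Fin m → Set V) (Gsol : Fin m → SimpleGraph V)
    (hTfam : ∀ i, Tfam i ⊆ ↑T)
    (hr : ∀ s t : V, (s, t) ∈ M → 1 ≤ r s t ∧ r s t ≤ k)
    (hgood : ∀ s t : V, (s, t) ∈ M → ∀ X : Finset V, ↑X ⊆ (↑T : Set V) →
      X.card ≤ k - 1 → s ∉ X → t ∉ X →
      ∃ i, s ∈ Tfam i ∧ t ∈ Tfam i ∧ ∀ x ∈ X, x ∉ Tfam i)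
    (hfeas : ∀ i, ∀ s t : V, s ∈ Tfam i → t ∈ Tfam i →
      ElemConn (Gsol i) (Tfam i) (r s t) s t) :
    ∀ s t : V, (s, t) ∈ M → ∀ X : Finset V, s ∉ X → t ∉ X →
      X.card ≤ r s t - 1 →
      (delGraph (⨆ i, Gsol i) ∅ ↑X).Reachable s t := by
  intro s t hst X hsX htX hcard
  classical
  obtain ⟨hr1, hrk⟩ := hr s t hst
  have hXT_card : (X.filter (· ∈ T)).card ≤ k - 1 :=
    (card_filter_le _ _).trans (hcard.trans (Nat.sub_le_sub_right hrk 1))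
  obtain ⟨i, hsi, hti, hmiss⟩ := hgood s t hst (X.filter (· ∈ T))
    (fun x hx => (mem_filter.1 hx).2) hXT_card
    (fun h => hsX (mem_filter.1 h).1) (fun h => htX (mem_filter.1 h).1)
  have hXi : Disjoint (X : Set V) (Tfam i) :=
    Set.disjoint_left.2 fun x hx hxi => hmiss x (mem_filter.2 ⟨hx, hTfam i hxi⟩) hxi
  exact ((hfeas i s t hsi hti).reachable_delGraph_of_card_lt hXi hsX htX (by omega)).mono
    (delGraph_mono (le_iSup Gsol i) _ _)

/-- Good family + feasible element-connectivity solutions imply that in the union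
graph, no vertex set of size ≤ r(s,t) − 1 separates any source-sink pair. -/
theorem good_family_gives_vertex_connectivity
    {V : Type*} [DecidableEq V] (T : Finset V) (M : Set (V × V))
    (r : V → V → ℕ) (k m : ℕ)
    (Tfam : Fin m → Set V) (Gsol : Fin m → SimpleGraph V)
    (hTfam : ∀ i, Tfam i ⊆ ↑T)
    (hM : ∀ s t : V, (s, t) ∈ M → s ∈ T ∧ t ∈ T)
    (hr : ∀ s t : V, (s, t) ∈ M → 1 ≤ r s t ∧ r s t ≤ k)
    (hgood : ∀ s t : V, (s, t) ∈ M → ∀ X : Finset V, ↑X ⊆ (↑T : Set V) →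
      X.card ≤ k - 1 → s ∉ X → t ∉ X →
      ∃ i, s ∈ Tfam i ∧ t ∈ Tfam i ∧ ∀ x ∈ X, x ∉ Tfam i)
    (hfeas : ∀ i, ∀ s t : V, s ∈ Tfam i → t ∈ Tfam i →
      ElemConn (Gsol i) (Tfam i) (r s t) s t) :
    ∀ s t : V, (s, t) ∈ M → ∀ X : Finset V, s ∉ X → t ∉ X →
      X.card ≤ r s t - 1 →
      (delGraph (⨆ i, Gsol i) ∅ ↑X).Reachable s t :=
  good_family_gives_vertex_connectivity_general T M r k m Tfam Gsol hTfam hr hgood hfeas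
end
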